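/- Let W ⊂ P^n_k be a local complete intersection integral closed subscheme defined by the homogeneous prime p. Then for every e ≥ 1, the symbolic power p^(e) equals the saturation (p^e)^sat of the ordinary power. -/

import Mathlib

/-!
Away from `M`, the ideal `p` is locally generated by a regular sequence. A regular sequence
`r_1, …, r_k` is quasi-regular (the associated graded ring of `q = (r_1, …, r_k)` is a polynomial
ring over `R ⧸ q`), so when `q` is prime every power `q^e` is `q`-primary: for
`s ∉ q`, `s * x ∈ q^e` forces `x ∈ q^e`. Hence an element `x` of `p^(e)`, with `s * x ∈ p^e` for
some `s ∉ p`, lies in `p^e A_m` at every prime `m ⊉ M`; so the primes containing `(p^e : x)` all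
contain `M`, and a power of `M` multiplies `x` into `p^e`. Conversely, if `x M^ν ⊆ p^e`, any
`t ∈ M \ p` gives `t^ν x ∈ p^e` with `t^ν ∉ p`.
-/

open MvPolynomial

namespace MvPolynomial

variable {R σ : Type*} [CommRing R] {d : ℕ}

lemma IsHomogeneous.divMonomial_single {F : MvPolynomial σ R} (hF : F.IsHomogeneous (d + 1))
    (i : σ) : (F.divMonomial (Finsupp.single i 1)).IsHomogeneous d := by
  intro m hm
  rw [coeff_divMonomial] at hm
  have := hF hm
  rw [map_add, Finsupp.weight_single] at this
  simp only [Pi.one_apply, smul_eq_mul, mul_one] at this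
  omega

lemma IsHomogeneous.modMonomial {F : MvPolynomial σ R} (hF : F.IsHomogeneous d)
    (s : σ →₀ ℕ) : (F.modMonomial s).IsHomogeneous d := by
  intro m hm
  by_cases hs : s ≤ m
  · exact absurd (coeff_modMonomial_of_le F hs) hm
  · exact hF (by rwa [coeff_modMonomial_of_not_le F hs] at hm)

lemma notMem_vars_modMonomial_single (F : MvPolynomial σ R) (i : σ) :
    i ∉ (F.modMonomial (Finsupp.single i 1)).vars := by
  classical
  rw [mem_vars_iff_mem_support]
  rintro ⟨m, hm, hi⟩
  refine mem_support_iff.mp hm (coeff_modMonomial_of_le F ?_)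
  exact Finsupp.single_le_iff.mpr (Nat.one_le_iff_ne_zero.mpr (Finsupp.mem_support_iff.mp hi))

lemma IsHomogeneous.exists_eq_X_last_mul_add_rename {n : ℕ} {F : MvPolynomial (Fin (n + 1)) R}
    (hF : F.IsHomogeneous (d + 1)) :
    ∃ H G, H.IsHomogeneous d ∧ G.IsHomogeneous (d + 1) ∧
      F = X (Fin.last n) * H + rename Fin.castSucc G := by
  classical
  obtain ⟨G, hG⟩ := exists_rename_eq_of_vars_subset_range
    (F.modMonomial (Finsupp.single (Fin.last n) 1)) Fin.castSucc (Fin.castSucc_injective n) fun i hi => by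
      obtain ⟨j, rfl⟩ := Fin.exists_castSucc_eq.mpr
        (ne_of_mem_of_not_mem hi (notMem_vars_modMonomial_single F _))
      exact ⟨j, rfl⟩
  refine ⟨_, G, hF.divMonomial_single (Fin.last n), ?_, ?_⟩
  · rw [← IsHomogeneous.rename_isHomogeneous_iff (Fin.castSucc_injective n), hG]
    exact hF.modMonomial _
  · rw [hG, divMonomial_add_modMonomial_single]

lemma IsHomogeneous.eval_mem_mul_pow {F : MvPolynomial σ R} (hF : F.IsHomogeneous d)
    {J : Ideal R} (hFJ : F ∈ Ideal.map C J) (r : σ → R) :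
    eval r F ∈ J * Ideal.span (Set.range r) ^ d := by
  rw [F.as_sum, map_sum]
  refine Ideal.sum_mem _ fun m hm => ?_
  have hm : m.degree = d := by
    rw [Finsupp.degree_eq_weight_one]; exact hF (mem_support_iff.mp hm)
  rw [eval_monomial]
  refine Ideal.mul_mem_mul (mem_map_C_iff.mp hFJ m) ?_
  exact (Ideal.mem_span_pow_iff_exists_isHomogeneous r _).mpr
    ⟨monomial m 1, isHomogeneous_monomial 1 hm, by simp [eval_monomial]⟩

lemma rename_mem_map_C {τ : Type*} (f : σ → τ) {J : Ideal R} {G : MvPolynomial σ R}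
    (hG : G ∈ Ideal.map C J) : rename f G ∈ Ideal.map (C : R →+* MvPolynomial τ R) J := by
  have := Ideal.mem_map_of_mem (rename f).toRingHom hG
  rwa [Ideal.map_map, show (rename f).toRingHom.comp C = C from
    RingHom.ext fun c => rename_C f c] at this

end MvPolynomial

lemma eval_snoc_X_last_mul_add_rename {R : Type*} [CommSemiring R] {n : ℕ} (r : Fin n → R)
    (a : R) (H : MvPolynomial (Fin (n + 1)) R) (G : MvPolynomial (Fin n) R) :
    eval (Fin.snoc r a) (X (Fin.last n) * H + rename Fin.castSucc G) =
      a * eval (Fin.snoc r a) H + eval r G := by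
  simp [eval_rename, Fin.snoc_comp_castSucc]

lemma Ideal.span_range_snoc_pow_succ_le {R : Type*} [CommRing R] {n : ℕ} (r : Fin n → R)
    (a : R) (d : ℕ) :
    Ideal.span (Set.range (Fin.snoc r a : Fin (n + 1) → R)) ^ (d + 1) ≤
      Ideal.span {a} * Ideal.span (Set.range (Fin.snoc r a : Fin (n + 1) → R)) ^ d ⊔
        Ideal.span (Set.range r) ^ (d + 1) := by
  intro x hx
  obtain ⟨P, hP, rfl⟩ := (Ideal.mem_span_pow_iff_exists_isHomogeneous _ x).mp hx
  obtain ⟨H, G, hH, hG, rfl⟩ := hP.exists_eq_X_last_mul_add_rename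
  rw [eval_snoc_X_last_mul_add_rename]
  exact Submodule.add_mem_sup (Ideal.mul_mem_mul (Ideal.mem_span_singleton_self a)
    ((Ideal.mem_span_pow_iff_exists_isHomogeneous _ _).mpr ⟨H, hH, rfl⟩))
    ((Ideal.mem_span_pow_iff_exists_isHomogeneous _ _).mpr ⟨G, hG, rfl⟩)

namespace RingTheory.Sequence

variable {R σ : Type*} [CommRing R]

/-- Quasi-regularity of `r`, i.e. injectivity of `(R ⧸ I)[X_σ] → gr_I R` for
`I = span (range r)`, stated degree by degree. -/
def IsQuasiRegular (r : σ → R) : Prop :=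
  ∀ (d : ℕ) (F : MvPolynomial σ R), F.IsHomogeneous d →
    eval r F ∈ Ideal.span (Set.range r) ^ (d + 1) → F ∈ Ideal.map C (Ideal.span (Set.range r))

theorem IsQuasiRegular.mem_pow_of_mul_mem_pow {r : σ → R} (hr : IsQuasiRegular r) {s : R}
    (hs : ∀ x, s * x ∈ Ideal.span (Set.range r) → x ∈ Ideal.span (Set.range r)) :
    ∀ {e : ℕ} {x : R}, s * x ∈ Ideal.span (Set.range r) ^ e → x ∈ Ideal.span (Set.range r) ^ e
  | 0, _, _ => by simp
  | e + 1, x, hsx => by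
    obtain ⟨F, hF, rfl⟩ := (Ideal.mem_span_pow_iff_exists_isHomogeneous r x).mp
      (hr.mem_pow_of_mul_mem_pow hs (Ideal.pow_le_pow_right e.le_succ hsx))
    have hsF : C s * F ∈ Ideal.map C (Ideal.span (Set.range r)) :=
      hr e _ (hF.C_mul s) (by simpa using hsx)
    have hF' : F ∈ Ideal.map C (Ideal.span (Set.range r)) :=
      mem_map_C_iff.mpr fun m => hs _ (by simpa using mem_map_C_iff.mp hsF m)
    simpa [pow_succ'] using hF.eval_mem_mul_pow hF' r

theorem isQuasiRegular_of_isEmpty [IsEmpty σ] (r : σ → R) : IsQuasiRegular r := by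
  intro d F _ hF
  rw [eq_C_of_isEmpty F, eval_C] at hF
  rw [eq_C_of_isEmpty F]
  exact Ideal.mem_map_of_mem C (Ideal.pow_le_self d.succ_ne_zero hF)

theorem IsQuasiRegular.snoc {n : ℕ} {r : Fin n → R} (hr : IsQuasiRegular r) {a : R}
    (ha : ∀ x, a * x ∈ Ideal.span (Set.range r) → x ∈ Ideal.span (Set.range r)) :
    IsQuasiRegular (Fin.snoc r a : Fin (n + 1) → R) := by
  set I := Ideal.span (Set.range (Fin.snoc r a : Fin (n + 1) → R))
  set I' := Ideal.span (Set.range r)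
  have hI'I : I' ≤ I := Ideal.span_mono (by simp)
  have haI : a ∈ I := Ideal.subset_span (by simp)
  intro d
  induction d with
  | zero =>
    intro F hF hFI
    rw [totalDegree_eq_zero_iff_eq_C.mp ((totalDegree_zero_iff_isHomogeneous _).mpr hF)] at hFI ⊢
    exact Ideal.mem_map_of_mem C (by simpa using hFI)
  | succ d ih =>
    intro F hF hFI
    obtain ⟨H, G, hH, hG, rfl⟩ := hF.exists_eq_X_last_mul_add_rename
    obtain ⟨az, haz, w, hw, hsum⟩ :=
      Submodule.mem_sup.mp (Ideal.span_range_snoc_pow_succ_le r a (d + 1) hFI)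
    obtain ⟨z, hz, rfl⟩ := Ideal.mem_span_singleton_mul.mp haz
    have hFeval := eval_snoc_X_last_mul_add_rename r a H G
    have hGeval : eval r G ∈ I' ^ (d + 1) :=
      (Ideal.mem_span_pow_iff_exists_isHomogeneous _ _).mpr ⟨G, hG, rfl⟩
    -- comparing the two expansions, `a` multiplies `z - H(r)` into `I' ^ (d + 1)`
    have hdiff : z - eval (Fin.snoc r a) H ∈ I' ^ (d + 1) := by
      refine hr.mem_pow_of_mul_mem_pow ha ?_
      have : a * (z - eval (Fin.snoc r a) H) = eval r G - w := by
        linear_combination hsum + hFeval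
      exact this ▸ sub_mem hGeval (Ideal.pow_le_pow_right (d + 1).le_succ hw)
    have hHI : H ∈ Ideal.map C I := by
      refine ih H hH ?_
      rw [← sub_sub_cancel z (eval _ H)]
      exact sub_mem hz (Ideal.pow_right_mono hI'I _ hdiff)
    obtain ⟨W, hW, hWeval⟩ := (Ideal.mem_span_pow_iff_exists_isHomogeneous _ _).mp hdiff
    have hGW : G - C a * W ∈ Ideal.map C I' := by
      refine hr (d + 1) _ (hG.sub (hW.C_mul a)) ?_
      have : eval r (G - C a * W) = w := by
        simp only [map_sub, map_mul, eval_C, hWeval]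
        linear_combination - hsum - hFeval
      exact this ▸ hw
    have hGI : G ∈ Ideal.map C I := by
      rw [← sub_add_cancel G (C a * W)]
      exact add_mem (Ideal.map_mono hI'I hGW)
        (Ideal.mul_mem_right _ _ (Ideal.mem_map_of_mem C haI))
    exact add_mem (Ideal.mul_mem_left _ _ hHI) (rename_mem_map_C _ hGI)

lemma _root_.Ideal.ofList_ofFn {n : ℕ} (r : Fin n → R) :
    Ideal.ofList (List.ofFn r) = Ideal.span (Set.range r) := by
  simp [Ideal.ofList, Set.range]

theorem IsWeaklyRegular.isQuasiRegular : ∀ {n : ℕ} {r : Fin n → R},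
    IsWeaklyRegular R (List.ofFn r) → IsQuasiRegular r
  | 0, r, _ => isQuasiRegular_of_isEmpty r
  | n + 1, r, h => by
    rw [List.ofFn_succ', List.concat_eq_append, isWeaklyRegular_append_iff,
      isWeaklyRegular_singleton_iff, Ideal.ofList_ofFn, smul_eq_mul, Ideal.mul_top] at h
    rw [← Fin.snoc_init_self r]
    exact IsQuasiRegular.snoc h.1.isQuasiRegular fun x =>
      (isSMulRegular_quotient_iff_mem_of_smul_mem _ _).mp h.2 x

theorem IsWeaklyRegular.mem_ofList_pow_of_mul_mem {bs : List R} (hbs : IsWeaklyRegular R bs)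
    (hq : (Ideal.ofList bs).IsPrime) {s x : R} (hs : s ∉ Ideal.ofList bs) {e : ℕ}
    (hsx : s * x ∈ Ideal.ofList bs ^ e) : x ∈ Ideal.ofList bs ^ e := by
  rw [← List.ofFn_get bs, Ideal.ofList_ofFn] at hq hs hsx ⊢
  rw [← List.ofFn_get bs] at hbs
  exact hbs.isQuasiRegular.mem_pow_of_mul_mem_pow (fun y hy => (hq.mem_or_mem hy).resolve_left hs)
    hsx

end RingTheory.Sequence

section Saturation

open RingTheory.Sequence

variable {A : Type*} [CommRing A]

theorem algebraMap_mem_map_pow_of_isWeaklyRegular {S : Type*} [CommRing S] [Algebra A S]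
    (N : Submonoid A) [IsLocalization N S] {p : Ideal A} (hp : p.IsPrime)
    (hNp : Disjoint (N : Set A) p) {bs : List S} (hbs : IsWeaklyRegular S bs)
    (hpbs : p.map (algebraMap A S) = Ideal.ofList bs) {s x : A} (hs : s ∉ p) {e : ℕ}
    (hsx : s * x ∈ p ^ e) : algebraMap A S x ∈ (p ^ e).map (algebraMap A S) := by
  have hq := IsLocalization.isPrime_of_isPrime_disjoint N S p hp hNp
  have hs' : algebraMap A S s ∉ p.map (algebraMap A S) := fun h =>
    hs (IsLocalization.under_map_of_isPrime_disjoint N S hp hNp ▸ h)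
  have hsx' := Ideal.mem_map_of_mem (algebraMap A S) hsx
  rw [Ideal.map_pow, hpbs, map_mul] at hsx'
  rw [Ideal.map_pow, hpbs]
  exact hbs.mem_ofList_pow_of_mul_mem (hpbs ▸ hq) (hpbs ▸ hs') hsx'

theorem mem_iSup_colon_pow_of_forall_algebraMap_mem [IsNoetherianRing A] {I M : Ideal A} {x : A}
    (h : ∀ (m : Ideal A) [m.IsPrime], I ≤ m → ¬ M ≤ m →
      algebraMap A (Localization.AtPrime m) x ∈ I.map (algebraMap A (Localization.AtPrime m))) :
    x ∈ ⨆ ν : ℕ, I.colon ((M ^ ν : Ideal A) : Set A) := by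
  have hM : M ≤ (I.colon {x}).radical := by
    rw [Ideal.radical_eq_sInf]
    refine le_sInf fun m ⟨hJm, hm⟩ => not_not.mp fun hMm => ?_
    have hIm : I ≤ m := fun y hy =>
      hJm (Submodule.mem_colon_singleton.mpr (Ideal.mul_mem_right x I hy))
    obtain ⟨t, ht, htx⟩ := (IsLocalization.algebraMap_mem_map_algebraMap_iff m.primeCompl _ I x).mp
      (h m hIm hMm)
    exact ht (hJm (Submodule.mem_colon_singleton.mpr htx))
  obtain ⟨ν, hν⟩ := Ideal.exists_pow_le_of_le_radical_of_fg hM (IsNoetherian.noetherian M)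
  refine Submodule.mem_iSup_of_mem ν (Submodule.mem_colon.mpr fun y hy => ?_)
  simpa [mul_comm] using Submodule.mem_colon_singleton.mp (hν hy)

theorem iSup_colon_pow_le_comap_map {I M p : Ideal A} [p.IsPrime] (hMp : ¬ M ≤ p) :
    ⨆ ν : ℕ, I.colon ((M ^ ν : Ideal A) : Set A) ≤
      (I.map (algebraMap A (Localization.AtPrime p))).comap
        (algebraMap A (Localization.AtPrime p)) := by
  obtain ⟨t, htM, htp⟩ := Set.not_subset.mp hMp
  refine iSup_le fun ν x hx => ?_
  rw [Ideal.mem_comap, IsLocalization.algebraMap_mem_map_algebraMap_iff p.primeCompl]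
  refine ⟨t ^ ν, fun h => htp (‹p.IsPrime›.mem_of_pow_mem ν h), ?_⟩
  simpa [mul_comm] using Submodule.mem_colon.mp hx _ (Ideal.pow_mem_pow htM ν)

end Saturation

theorem stmt14_general {k : Type*} [Field k] (n : ℕ)
    (p M : Ideal (MvPolynomial (Fin (n + 1)) k))
    (hp : p.IsPrime)
    (hpM : p < M)
    -- `W` is a local complete intersection
    (hlci : ∀ (m : Ideal (MvPolynomial (Fin (n + 1)) k)) [m.IsPrime], p ≤ m → ¬ M ≤ m →
      ∃ bs : List (Localization.AtPrime m),
        RingTheory.Sequence.IsRegular (Localization.AtPrime m) bs ∧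
        Ideal.map (algebraMap (MvPolynomial (Fin (n + 1)) k) (Localization.AtPrime m)) p =
          Ideal.ofList bs) :
    ∀ e : ℕ, 0 < e →
      -- `p^(e) = p^e A_p ∩ A` ...
      (Ideal.map (algebraMap (MvPolynomial (Fin (n + 1)) k)
          (Localization.AtPrime (hp := hp) p)) (p ^ e)).comap
        (algebraMap (MvPolynomial (Fin (n + 1)) k) (Localization.AtPrime (hp := hp) p))
      -- ... equals the saturation `(p^e)^sat`
        = ⨆ ν : ℕ, (p ^ e).colon ((M ^ ν : Ideal (MvPolynomial (Fin (n + 1)) k)) : Set (MvPolynomial (Fin (n + 1)) k)) := by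
  intro e _
  refine le_antisymm (fun x hx => ?_) (iSup_colon_pow_le_comap_map hpM.not_ge)
  obtain ⟨s, hs, hsx⟩ :=
    (IsLocalization.algebraMap_mem_map_algebraMap_iff p.primeCompl _ _ x).mp hx
  refine mem_iSup_colon_pow_of_forall_algebraMap_mem fun m _ hpem hMm => ?_
  have hpm : p ≤ m := ‹m.IsPrime›.le_of_pow_le hpem
  obtain ⟨bs, hbs, hpbs⟩ := hlci m hpm hMm
  exact algebraMap_mem_map_pow_of_isWeaklyRegular m.primeCompl hp
    (Set.disjoint_left.mpr fun y hy hyp => hy (hpm hyp)) hbs.toIsWeaklyRegular hpbs hs hsx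

theorem stmt14 {k : Type*} [Field k] (n : ℕ)
    (p M : Ideal (MvPolynomial (Fin (n + 1)) k))
    (hM : M = Ideal.span (Set.range (X : Fin (n + 1) → MvPolynomial (Fin (n + 1)) k)))
    (hp : p.IsPrime)
    (hhom : ∃ S : Set (MvPolynomial (Fin (n + 1)) k),
      (∀ f ∈ S, ∃ d, f.IsHomogeneous d) ∧ p = Ideal.span S)
    (hpM : p < M)
    -- `W` is a local complete intersection
    (hlci : ∀ (m : Ideal (MvPolynomial (Fin (n + 1)) k)) [m.IsPrime], p ≤ m → ¬ M ≤ m →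
      ∃ bs : List (Localization.AtPrime m),
        RingTheory.Sequence.IsRegular (Localization.AtPrime m) bs ∧
        Ideal.map (algebraMap (MvPolynomial (Fin (n + 1)) k) (Localization.AtPrime m)) p =
          Ideal.ofList bs) :
    ∀ e : ℕ, 0 < e →
      -- `p^(e) = p^e A_p ∩ A` ...
      (Ideal.map (algebraMap (MvPolynomial (Fin (n + 1)) k)
          (Localization.AtPrime (hp := hp) p)) (p ^ e)).comap
        (algebraMap (MvPolynomial (Fin (n + 1)) k) (Localization.AtPrime (hp := hp) p))
      -- ... equals the saturation `(p^e)^sat`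
        = ⨆ ν : ℕ, (p ^ e).colon ((M ^ ν : Ideal (MvPolynomial (Fin (n + 1)) k)) : Set (MvPolynomial (Fin (n + 1)) k)) :=
  stmt14_general n p M hp hpM hlci
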